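/- Let x₀ ∈ ℂ and r > 0, and let μ be a positive Borel measure on the open disc D(x₀,r) with 0 < γ := μ(D(x₀,r)) < ∞. Define u(z) := ∫_{D(x₀,r)} log|ζ−z| dμ(ζ). Then for every z ∈ D(x₀,r): e^{−2u(z)} ≤ (1/γ) ∫_{D(x₀,r)} |ζ−z|^{−2γ} dμ(ζ), as an inequality in [0,+∞]. -/

import Mathlib

open MeasureTheory Filter Metric Topology
open scoped ENNReal NNReal BigOperators

noncomputable section

/-- The exponential function from `EReal` to `ℝ≥0∞`. -/
def eexp (x : EReal) : ℝ≥0∞ :=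
  if x = ⊤ then ⊤ else if x = ⊥ then 0 else ENNReal.ofReal (Real.exp x.toReal)

/-- The logarithmic potential `u(z) = ∫ log|z−ζ| dμ(ζ)` of a positive measure `μ` on `ℂ`,
with values in `EReal` (positive part minus negative part). -/
def logPot (μ : Measure ℂ) (z : ℂ) : EReal :=
  ((∫⁻ ζ, ENNReal.ofReal (Real.log ‖z - ζ‖) ∂μ : ℝ≥0∞) : EReal)
    - ((∫⁻ ζ, ENNReal.ofReal (-Real.log ‖z - ζ‖) ∂μ : ℝ≥0∞) : EReal)

/-- The closed square `P(x₀, 2r)` of edge `2r` centred at `x₀`, with sides parallel to the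
coordinate axes. -/
def cSquare (x₀ : ℂ) (r : ℝ) : Set ℂ :=
  {z : ℂ | |z.re - x₀.re| ≤ r ∧ |z.im - x₀.im| ≤ r}

end

/-!
Write `f ζ = log ‖z - ζ‖` and `γ = μ(D(x₀, r))`. Then `-2 u(z)` is the `μ`-average of `-2γ f`, so
Jensen's inequality for `exp` bounds `e^{-2u(z)}` by the average of `exp (-2γ f) = ‖ζ - z‖^{-2γ}`.
When that average is finite, `f` is integrable: it is bounded above on the disc, and
`c · (-f) ≤ exp (-c f)` controls its negative part.
-/

theorem eexp_coe (x : ℝ) : eexp x = ENNReal.ofReal (Real.exp x) := by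
  rw [eexp, if_neg (EReal.coe_ne_top x), if_neg (EReal.coe_ne_bot x), EReal.toReal_coe]

theorem logPot_eq_integral {μ : Measure ℂ} {z : ℂ}
    (h : Integrable (fun ζ => Real.log ‖z - ζ‖) μ) :
    logPot μ z = ((∫ ζ, Real.log ‖z - ζ‖ ∂μ : ℝ) : EReal) := by
  rw [integral_eq_lintegral_pos_part_sub_lintegral_neg_part h, EReal.coe_sub,
    EReal.coe_ennreal_toReal h.lintegral_lt_top.ne,
    EReal.coe_ennreal_toReal
      (Integrable.lintegral_lt_top (f := fun ζ => -Real.log ‖z - ζ‖) h.neg).ne, logPot]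

theorem ENNReal.ofReal_exp_neg_mul_log_le_rpow_neg {t c : ℝ} (ht : 0 ≤ t) (hc : 0 ≤ c) :
    ENNReal.ofReal (Real.exp (-c * Real.log t)) ≤ ENNReal.ofReal t ^ (-c) := by
  rcases ht.eq_or_lt with rfl | ht
  · rcases hc.eq_or_lt with rfl | hc
    · simp
    · simp [ENNReal.zero_rpow_of_neg (neg_neg_of_pos hc)]
  · rw [ENNReal.ofReal_rpow_of_pos ht, Real.rpow_def_of_pos ht, mul_comm]

section Integral

variable {α : Type*} [MeasurableSpace α] {μ : Measure α}

theorem ofReal_exp_average_le_laverage [IsFiniteMeasure μ] [NeZero μ] {f : α → ℝ}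
    (hf : Integrable f μ) :
    ENNReal.ofReal (Real.exp (⨍ x, f x ∂μ)) ≤ ⨍⁻ x, ENNReal.ofReal (Real.exp (f x)) ∂μ := by
  have hexp_nonneg : 0 ≤ᵐ[μ] fun x => Real.exp (f x) := ae_of_all _ fun x => (Real.exp_pos _).le
  by_cases hexp : Integrable (fun x => Real.exp (f x)) μ
  · rw [laverage_eq, ← ofReal_average hexp hexp_nonneg]
    exact ENNReal.ofReal_le_ofReal
      (convexOn_exp.map_average_le Real.continuousOn_exp isClosed_univ (by simp) hf hexp)
  · rw [← lintegral_ofReal_ne_top_iff_integrable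
      (Real.continuous_exp.comp_aestronglyMeasurable hf.1) hexp_nonneg, not_ne_iff] at hexp
    rw [laverage_eq, hexp, ENNReal.top_div_of_ne_top (measure_ne_top μ _)]
    exact le_top

theorem integrable_of_ae_le_of_lintegral_exp_neg_mul_ne_top [IsFiniteMeasure μ] {f : α → ℝ}
    {C c : ℝ} (hf : AEStronglyMeasurable f μ) (hle : ∀ᵐ x ∂μ, f x ≤ C) (hc : 0 < c)
    (hexp : ∫⁻ x, ENNReal.ofReal (Real.exp (-c * f x)) ∂μ ≠ ⊤) : Integrable f μ := by
  have hexp_int : Integrable (fun x => Real.exp (-c * f x)) μ :=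
    (lintegral_ofReal_ne_top_iff_integrable
      (Real.continuous_exp.comp_aestronglyMeasurable (hf.const_mul _))
      (ae_of_all _ fun x => (Real.exp_pos _).le)).mp hexp
  refine ((integrable_const |C|).add (hexp_int.const_mul c⁻¹)).mono' hf ?_
  filter_upwards [hle] with x hx
  have hneg : -f x ≤ c⁻¹ * Real.exp (-c * f x) := by
    rw [le_inv_mul_iff₀ hc]
    linarith [Real.add_one_le_exp (-c * f x)]
  rw [Pi.add_apply, Real.norm_eq_abs, abs_le]
  constructor <;> linarith [le_abs_self C, abs_nonneg C,
    mul_pos (inv_pos.mpr hc) (Real.exp_pos (-c * f x))]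

end Integral

theorem eexp_neg_mul_logPot_le {μ : Measure ℂ} [IsFiniteMeasure μ] [NeZero μ] {z : ℂ} {C c : ℝ}
    (hle : ∀ᵐ ζ ∂μ, Real.log ‖z - ζ‖ ≤ C) (hc : 0 < c) :
    eexp (((-c : ℝ) : EReal) * logPot μ z) ≤
      (μ Set.univ)⁻¹ * ∫⁻ ζ, ENNReal.ofReal ‖ζ - z‖ ^ (-(c * (μ Set.univ).toReal)) ∂μ := by
  set γ := (μ Set.univ).toReal
  have hγ : 0 < γ := ENNReal.toReal_pos (NeZero.ne (μ Set.univ)) (measure_ne_top _ _)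
  set f : ℂ → ℝ := fun ζ => Real.log ‖z - ζ‖
  have hexp_le : ∫⁻ ζ, ENNReal.ofReal (Real.exp (-(c * γ) * f ζ)) ∂μ ≤
      ∫⁻ ζ, ENNReal.ofReal ‖ζ - z‖ ^ (-(c * γ)) ∂μ := lintegral_mono fun ζ => by
    rw [norm_sub_rev]
    exact ENNReal.ofReal_exp_neg_mul_log_le_rpow_neg (norm_nonneg _) (by positivity)
  by_cases hL : ∫⁻ ζ, ENNReal.ofReal ‖ζ - z‖ ^ (-(c * γ)) ∂μ = ⊤
  · rw [hL, ENNReal.mul_top (ENNReal.inv_ne_zero.mpr (measure_ne_top _ _))]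
    exact le_top
  have hf : Integrable f μ := integrable_of_ae_le_of_lintegral_exp_neg_mul_ne_top (by fun_prop)
    hle (by positivity) (ne_top_of_le_ne_top hL hexp_le)
  calc eexp (((-c : ℝ) : EReal) * logPot μ z)
      = ENNReal.ofReal (Real.exp (⨍ ζ, -(c * γ) * f ζ ∂μ)) := by
        rw [logPot_eq_integral hf, ← EReal.coe_mul, eexp_coe, average_eq, integral_const_mul,
          smul_eq_mul, show μ.real Set.univ = γ from rfl]
        field_simp
        rfl
    _ ≤ ⨍⁻ ζ, ENNReal.ofReal (Real.exp (-(c * γ) * f ζ)) ∂μ :=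
        ofReal_exp_average_le_laverage (hf.const_mul _)
    _ ≤ (μ Set.univ)⁻¹ * ∫⁻ ζ, ENNReal.ofReal ‖ζ - z‖ ^ (-(c * γ)) ∂μ := by
        rw [laverage_eq, ENNReal.div_eq_inv_mul]
        gcongr

theorem expNegPotential_le_general (x₀ : ℂ) (r : ℝ) (μ : Measure ℂ)
    (hsupp : μ (Metric.ball x₀ r)ᶜ = 0)
    (hγpos : 0 < (μ (Metric.ball x₀ r)).toReal) :
    ∀ z ∈ Metric.ball x₀ r,
      eexp (((-2 : ℝ) : EReal) * logPot μ z) ≤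
        (ENNReal.ofReal ((μ (Metric.ball x₀ r)).toReal))⁻¹ *
          ∫⁻ ζ in Metric.ball x₀ r,
            (ENNReal.ofReal ‖ζ - z‖)
              ^ (-(2 * (μ (Metric.ball x₀ r)).toReal)) ∂μ := by
  intro z hz
  obtain ⟨hμ₀, hμtop⟩ := ENNReal.toReal_pos_iff.mp hγpos
  have hae : ∀ᵐ ζ ∂μ, ζ ∈ ball x₀ r := ae_iff.mpr hsupp
  have hμuniv : μ Set.univ = μ (ball x₀ r) := (measure_congr (ae_eq_univ.mpr hsupp)).symm
  have : IsFiniteMeasure μ := ⟨hμuniv ▸ hμtop⟩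
  have : NeZero μ := ⟨fun h => hμ₀.ne' (by simp [h])⟩
  rw [Measure.restrict_eq_self_of_ae_mem hae, ← hμuniv, ENNReal.ofReal_toReal (measure_ne_top _ _)]
  refine eexp_neg_mul_logPot_le (C := 2 * r) ?_ two_pos
  filter_upwards [hae] with ζ hζ
  calc Real.log ‖z - ζ‖ ≤ dist z ζ := by rw [dist_eq_norm]; exact Real.log_le_self (norm_nonneg _)
    _ ≤ dist z x₀ + dist ζ x₀ := dist_triangle_right _ _ _
    _ ≤ 2 * r := by linarith [mem_ball.mp hz, mem_ball.mp hζ]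

/-- the paper's Lemma 2.2: Jensen-type bound for the exponential of the
negative logarithmic potential. -/
theorem expNegPotential_le (x₀ : ℂ) (r : ℝ) (hr : 0 < r) (μ : Measure ℂ)
    (hsupp : μ (Metric.ball x₀ r)ᶜ = 0)
    (hγfin : μ (Metric.ball x₀ r) ≠ ⊤)
    (hγpos : 0 < (μ (Metric.ball x₀ r)).toReal) :
    ∀ z ∈ Metric.ball x₀ r,
      eexp (((-2 : ℝ) : EReal) * logPot μ z) ≤
        (ENNReal.ofReal ((μ (Metric.ball x₀ r)).toReal))⁻¹ *
          ∫⁻ ζ in Metric.ball x₀ r,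
            (ENNReal.ofReal ‖ζ - z‖)
              ^ (-(2 * (μ (Metric.ball x₀ r)).toReal)) ∂μ :=
  expNegPotential_le_general x₀ r μ hsupp hγpos
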